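/- Let X satisfy P(X = s·r^(k−1)) = p·q^(k−1), k ≥ 1, with 0 < p < 1, q = 1 − p, s > 0, r = 1/q, and define μ(x) = ∫₀^x P(X > y) dy. Then μ(x) ∼ s·p·log_r(x/s) as x → ∞, and consequently μ(x·log₂ x) ∼ μ(x) as x → ∞. -/

import Mathlib

open MeasureTheory ProbabilityTheory Filter Asymptotics Real Set

/-!
On `[s r^n, s r^(n+1))` the survival function `y ↦ P(X > y)` is constant, equal to `q^(n+1)`, so
`μ` grows by exactly `q^(n+1) · s r^n (r - 1) = s p` across it (as `q r = 1`), and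
`μ (s r^n) = s + n s p`. Being monotone, `μ` stays within `s p` of `s + s p log_r (x / s)`,
whence `μ(x) ∼ s p log_r (x / s)`. Finally `log (x log₂ x) = log x + O(log log x)`, so the
logarithmic scale does not notice the substitution `x ↦ x log₂ x`.
-/

section Atoms

variable {Ω : Type*} [MeasurableSpace Ω] {P : Measure Ω}

lemma ae_exists_eq_of_tsum_measure_eq_one [IsProbabilityMeasure P] {β ι : Type*}
    [MeasurableSpace β] [MeasurableSingletonClass β] [Countable ι] {X : Ω → β}
    (hX : Measurable X) {a : ι → β} (ha : Function.Injective a)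
    (hsum : ∑' k, P {ω | X ω = a k} = 1) :
    ∀ᵐ ω ∂P, ∃ k, X ω = a k := by
  have hmeas : ∀ k, MeasurableSet {ω | X ω = a k} := fun k => hX (measurableSet_singleton _)
  have hdisj : Pairwise (Function.onFun Disjoint fun k => {ω | X ω = a k}) :=
    fun i j hij => Set.disjoint_left.2 fun ω hi hj => hij (ha (hi.symm.trans hj))
  have hunion : P (⋃ k, {ω | X ω = a k}) = 1 := by rw [measure_iUnion hdisj hmeas, hsum]
  have := (prob_compl_eq_zero_iff (MeasurableSet.iUnion hmeas)).2 hunion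
  rw [ae_iff]
  simpa [Set.compl_iUnion, Set.ofPred_forall, Set.compl_ofPred] using this

lemma measure_lt_eq_tsum_of_ae_exists_eq {X : Ω → ℝ} (hX : Measurable X) {a : ℕ → ℝ}
    (ha : Function.Injective a) (hX_ae : ∀ᵐ ω ∂P, ∃ k, X ω = a k) {n : ℕ} {y : ℝ}
    (hy : ∀ k, y < a k ↔ n ≤ k) :
    P {ω | y < X ω} = ∑' k, P {ω | X ω = a (k + n)} := by
  have hae : {ω | y < X ω} =ᵐ[P] ⋃ k, {ω | X ω = a (k + n)} := by
    filter_upwards [hX_ae] with ω ⟨j, hj⟩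
    change (y < X ω) = (ω ∈ ⋃ k, {ω | X ω = a (k + n)})
    rw [eq_iff_iff, Set.mem_iUnion, hj, hy]
    refine ⟨fun h => ⟨j - n, show X ω = _ by rw [hj, Nat.sub_add_cancel h]⟩, fun ⟨k, hk⟩ => ?_⟩
    have := ha (hj.symm.trans hk)
    omega
  refine (measure_congr hae).trans (measure_iUnion (fun i j hij => ?_)
    fun k => hX (measurableSet_singleton _))
  exact Set.disjoint_left.2 fun ω hi hj => hij (by have := ha (hi.symm.trans hj); omega)

end Atoms

lemma hasSum_one_sub_mul_pow_add {q : ℝ} (hq0 : 0 ≤ q) (hq1 : q < 1) (n : ℕ) :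
    HasSum (fun k => (1 - q) * q ^ (k + n)) (q ^ n) := by
  have h := (hasSum_geometric_of_lt_one hq0 hq1).mul_left ((1 - q) * q ^ n)
  rw [mul_right_comm, mul_inv_cancel₀ (sub_pos.2 hq1).ne', one_mul] at h
  simpa only [pow_add, mul_assoc, mul_comm (q ^ n)] using h

lemma StrictMono.lt_apply_iff_succ_le {α : Type*} [LinearOrder α] {a : ℕ → α} (ha : StrictMono a)
    {n : ℕ} {y : α} (hy : y ∈ Ico (a n) (a (n + 1))) (k : ℕ) : y < a k ↔ n + 1 ≤ k := by
  refine ⟨fun h => ?_, fun h => hy.2.trans_le (ha.monotone h)⟩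
  by_contra! hk
  exact (ha.monotone (Nat.lt_succ_iff.1 hk)).trans hy.1 |>.not_gt h

lemma Monotone.isEquivalent_logb_of_apply_geometric {f : ℝ → ℝ} (hf : Monotone f)
    {s r b c : ℝ} (hs : 0 < s) (hr : 1 < r) (hb : 0 < b)
    (hval : ∀ n : ℕ, f (s * r ^ n) = c + n * b) :
    f ~[atTop] fun x => b * logb r (x / s) := by
  have hL : Tendsto (fun x => logb r (x / s)) atTop atTop :=
    (tendsto_logb_atTop hr).comp (tendsto_id.atTop_div_const hs)
  have hbound : ∀ᶠ x in atTop, ‖f x - b * logb r (x / s)‖ ≤ (|c| + b) * ‖(1 : ℝ)‖ := by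
    filter_upwards [eventually_ge_atTop s] with x hx
    have hxs : 0 < x / s := div_pos (hs.trans_le hx) hs
    set n := ⌊logb r (x / s)⌋₊
    have hn : (n : ℝ) ≤ logb r (x / s) :=
      Nat.floor_le (logb_nonneg hr ((one_le_div hs).2 hx))
    have hn' : logb r (x / s) < n + 1 := Nat.lt_floor_add_one _
    have hlo : s * r ^ n ≤ x := by
      have := (le_logb_iff_rpow_le hr hxs).1 hn
      rwa [rpow_natCast, le_div_iff₀' hs] at this
    have hhi : x ≤ s * r ^ (n + 1) := by
      have := ((logb_lt_iff_lt_rpow hr hxs).1 hn').le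
      rwa [← Nat.cast_succ, rpow_natCast, div_le_iff₀' hs] at this
    have h1 := hf hlo
    have h2 := hf hhi
    rw [hval] at h1 h2
    push_cast at h2
    rw [norm_one, mul_one, Real.norm_eq_abs, abs_le]
    constructor <;> nlinarith [neg_abs_le c, le_abs_self c]
  have hO : (fun x => f x - b * logb r (x / s)) =O[atTop] fun _ => (1 : ℝ) :=
    IsBigO.of_bound _ hbound
  have ho : (fun _ => (1 : ℝ)) =o[atTop] fun x => b * logb r (x / s) :=
    (isLittleO_one_left_iff ℝ).2 (tendsto_norm_atTop_atTop.comp (hL.const_mul_atTop hb))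
  exact (hO.trans_isLittleO ho).isEquivalent

lemma isEquivalent_log_div_const {s : ℝ} (hs : s ≠ 0) :
    (fun x => log (x / s)) ~[atTop] log := by
  have heq : (fun x => log (x / s)) =ᶠ[atTop] fun x => log x - log s := by
    filter_upwards [eventually_gt_atTop 0] with x hx using log_div hx.ne' hs
  exact (IsEquivalent.refl.sub_isLittleO isLittleO_const_log_atTop).congr_left heq.symm

lemma isEquivalent_log_mul_logb {b : ℝ} (hb : log b ≠ 0) :
    (fun x => log (x * logb b x)) ~[atTop] log := by
  have heq : (fun x => log (x * logb b x)) =ᶠ[atTop]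
      fun x => log x + (log (log x) - log (log b)) := by
    filter_upwards [eventually_gt_atTop 1] with x hx
    have hlog : log x ≠ 0 := (log_pos hx).ne'
    rw [logb, log_mul (by linarith) (div_ne_zero hlog hb), log_div hlog hb]
  have ho : (fun x => log (log x) - log (log b)) =o[atTop] log :=
    (isLittleO_log_id_atTop.comp_tendsto tendsto_log_atTop).sub isLittleO_const_log_atTop
  exact (IsEquivalent.refl.add_isLittleO ho).congr_left heq.symm

lemma isEquivalent_logb_mul_logb_div {b r s : ℝ} (hb : 1 < b) (hs : s ≠ 0) :
    (fun x => logb r (x * logb b x / s)) ~[atTop] fun x => logb r (x / s) := by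
  have hφ : Tendsto (fun x => x * logb b x) atTop atTop :=
    tendsto_id.atTop_mul_atTop₀ (tendsto_logb_atTop hb)
  have hlog : (fun x => log (x * logb b x / s)) ~[atTop] fun x => log (x / s) :=
    (((isEquivalent_log_div_const hs).comp_tendsto hφ).trans
      (isEquivalent_log_mul_logb (log_pos hb).ne')).trans (isEquivalent_log_div_const hs).symm
  exact hlog.div (IsEquivalent.refl (u := fun _ => log r))

section Survival

variable {Ω : Type*} [MeasureSpace Ω] [IsFiniteMeasure (ℙ : Measure Ω)] {X : Ω → ℝ}

lemma antitone_measure_lt_toReal :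
    Antitone fun y => (ℙ {ω | y < X ω}).toReal :=
  fun _ _ hab => ENNReal.toReal_mono (measure_ne_top _ _)
    (measure_mono fun _ hω => hab.trans_lt hω)

variable {μ : ℝ → ℝ}
    (hμ : ∀ x : ℝ, μ x = ∫ y in (0 : ℝ)..x, (ℙ {ω | y < X ω}).toReal)
include hμ

lemma sub_eq_integral_measure_lt_toReal (a b : ℝ) :
    μ b - μ a = ∫ y in a..b, (ℙ {ω | y < X ω}).toReal := by
  rw [hμ, hμ]
  exact intervalIntegral.integral_interval_sub_left antitone_measure_lt_toReal.intervalIntegrable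
    antitone_measure_lt_toReal.intervalIntegrable

lemma monotone_of_eq_integral_measure_lt : Monotone μ := fun a b hab =>
  sub_nonneg.1 <| (sub_eq_integral_measure_lt_toReal hμ a b).symm ▸
    intervalIntegral.integral_nonneg hab fun _ _ => ENNReal.toReal_nonneg

end Survival

section Petersburg

variable {Ω : Type*} [MeasureSpace Ω] {X : Ω → ℝ} {p q s r : ℝ}

lemma petersburg_measure_lt_toReal [IsProbabilityMeasure (ℙ : Measure Ω)] (hX : Measurable X)
    (hq0 : 0 ≤ q) (hq1 : q < 1) (hp : p = 1 - q) (hs : 0 < s) (hr : 1 < r)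
    (hlaw : ∀ k : ℕ, ℙ {ω | X ω = s * r ^ k} = ENNReal.ofReal (p * q ^ k))
    {n : ℕ} {y : ℝ} (hy : ∀ k : ℕ, y < s * r ^ k ↔ n ≤ k) :
    (ℙ {ω | y < X ω}).toReal = q ^ n := by
  have ha : StrictMono fun k : ℕ => s * r ^ k := (pow_right_strictMono₀ hr).const_mul hs
  have htail : ∀ n, ∑' k, ℙ {ω | X ω = s * r ^ (k + n)} = ENNReal.ofReal (q ^ n) := fun n => by
    have h := hasSum_one_sub_mul_pow_add hq0 hq1 n
    simp_rw [hlaw, hp]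
    rw [← ENNReal.ofReal_tsum_of_nonneg (fun k => mul_nonneg (sub_nonneg.2 hq1.le)
      (pow_nonneg hq0 _)) h.summable, h.tsum_eq]
  have hX_ae := ae_exists_eq_of_tsum_measure_eq_one hX ha.injective (by simpa using htail 0)
  rw [measure_lt_eq_tsum_of_ae_exists_eq hX ha.injective hX_ae hy, htail,
    ENNReal.toReal_ofReal (pow_nonneg hq0 n)]

variable [IsProbabilityMeasure (ℙ : Measure Ω)] {μ : ℝ → ℝ}
    (hμ : ∀ x : ℝ, μ x = ∫ y in (0 : ℝ)..x, (ℙ {ω | y < X ω}).toReal)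
include hμ

lemma petersburg_mu_apply_geometric (hX : Measurable X) (hq0 : 0 ≤ q) (hq1 : q < 1)
    (hp : p = 1 - q) (hs : 0 < s) (hr : 1 < r) (hqr : q * r = 1)
    (hlaw : ∀ k : ℕ, ℙ {ω | X ω = s * r ^ k} = ENNReal.ofReal (p * q ^ k)) (n : ℕ) :
    μ (s * r ^ n) = s + n * (s * p) := by
  have ha : StrictMono fun k : ℕ => s * r ^ k := (pow_right_strictMono₀ hr).const_mul hs
  have hF {m : ℕ} {y : ℝ} (hy : ∀ k : ℕ, y < s * r ^ k ↔ m ≤ k) :=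
    petersburg_measure_lt_toReal hX hq0 hq1 hp hs hr hlaw hy
  have hconst {a b c : ℝ} (hab : a ≤ b) (h : EqOn (fun y => (ℙ {ω | y < X ω}).toReal)
      (fun _ => c) (Ioo a b)) : μ b - μ a = (b - a) * c := by
    rw [sub_eq_integral_measure_lt_toReal hμ, intervalIntegral.integral_congr_Ioo_of_le hab h,
      intervalIntegral.integral_const, smul_eq_mul]
  induction n with
  | zero =>
    have h := hconst hs.le (c := 1) fun y hy => by
      simpa using hF fun k => iff_of_true (hy.2.trans_le (by simpa using ha.monotone k.zero_le))
        k.zero_le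
    rw [hμ 0, intervalIntegral.integral_same] at h
    simpa using h
  | succ n ih =>
    have h := hconst (ha (n.lt_succ_self)).le (c := q ^ (n + 1)) fun y hy =>
      hF (ha.lt_apply_iff_succ_le (Ioo_subset_Ico_self hy))
    have hstep : (s * r ^ (n + 1) - s * r ^ n) * q ^ (n + 1) = s * p := by
      calc (s * r ^ (n + 1) - s * r ^ n) * q ^ (n + 1) = s * (q * r) ^ n * (q * r - q) := by ring
        _ = s * p := by rw [hqr, one_pow, hp]; ring
    rw [hstep, ih] at h
    push_cast
    linarith

lemma petersburg_mu_isEquivalent (hX : Measurable X) (hq0 : 0 ≤ q) (hq1 : q < 1)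
    (hp : p = 1 - q) (hs : 0 < s) (hr : 1 < r) (hqr : q * r = 1)
    (hlaw : ∀ k : ℕ, ℙ {ω | X ω = s * r ^ k} = ENNReal.ofReal (p * q ^ k)) :
    μ ~[atTop] fun x => s * p * logb r (x / s) :=
  (monotone_of_eq_integral_measure_lt hμ).isEquivalent_logb_of_apply_geometric hs hr
    (mul_pos hs (by linarith)) (petersburg_mu_apply_geometric hμ hX hq0 hq1 hp hs hr hqr hlaw)

end Petersburg

theorem petersburg_mu_asymptotics
    {Ω : Type*} [MeasureSpace Ω] [IsProbabilityMeasure (ℙ : Measure Ω)]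
    (X : Ω → ℝ) (hX : Measurable X) (p q s r : ℝ)
    (hp : 0 < p) (hp1 : p < 1) (hq : q = 1 - p) (hs : 0 < s) (hr : r = 1 / q)
    (hlaw : ∀ k : ℕ, ℙ {ω | X ω = s * r ^ k} = ENNReal.ofReal (p * q ^ k))
    (μ : ℝ → ℝ)
    (hμ : ∀ x : ℝ, μ x = ∫ y in (0 : ℝ)..x, (ℙ {ω | y < X ω}).toReal) :
    Filter.Tendsto (fun x : ℝ => μ x / (s * p * Real.logb r (x / s)))
        Filter.atTop (nhds 1)
      ∧ Filter.Tendsto (fun x : ℝ => μ (x * Real.logb 2 x) / μ x)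
        Filter.atTop (nhds 1) := by
  have hq0 : 0 < q := by linarith
  have hqr : q * r = 1 := by rw [hr]; field_simp
  have hr1 : 1 < r := by rw [hr, one_lt_div hq0]; linarith
  have hequiv : μ ~[atTop] fun x => s * p * logb r (x / s) :=
    petersburg_mu_isEquivalent hμ hX hq0.le (by linarith) (by linarith) hs hr1 hqr hlaw
  have hlog_atTop : Tendsto (fun x => s * p * logb r (x / s)) atTop atTop :=
    ((tendsto_logb_atTop hr1).comp (tendsto_id.atTop_div_const hs)).const_mul_atTop (by positivity)
  have hcomp : (fun x => μ (x * logb 2 x)) ~[atTop] μ :=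
    ((hequiv.comp_tendsto (tendsto_id.atTop_mul_atTop₀ (tendsto_logb_atTop one_lt_two))).trans
      (IsEquivalent.refl.mul (isEquivalent_logb_mul_logb_div one_lt_two hs.ne'))).trans
      hequiv.symm
  have hμ_atTop : Tendsto μ atTop atTop := hequiv.symm.tendsto_atTop hlog_atTop
  exact ⟨(isEquivalent_iff_tendsto_one (hlog_atTop.eventually_ne_atTop 0)).1 hequiv,
    (isEquivalent_iff_tendsto_one (hμ_atTop.eventually_ne_atTop 0)).1 hcomp⟩
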